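/- arXiv:math/0610713 — 3 statements merged into one kernel-verified Lean document; each statement's English description precedes it below -/
import Mathlib

section
/- Let $n \ge 2$, let $l$ be a divisor of $n$ with $1 \le l < n$, and let $u \in M_n(\mathbb{C})$ be the cyclic permutation unitary. Let $S$ be the linear span of the diagonal matrix units $\{e_{11}, \dots, e_{nn}\}$ together with $\{u^l, u^{2l}, \dots, u^{n-l}\}$, and let $E$ be the subalgebra generated by $S$. Then for every $b \in E$ with $\mathrm{tr}_n(b) = 0$ and every $k$ with $1 \le k \le l-1$, one has $\mathrm{tr}_n(u^k b) = 0$. -/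
open Matrix
open Fin.NatCast

/-! Matrices whose `(i, j)` entry vanishes unless `i ≡ j (mod l)` form a subalgebra. It contains
the diagonal units, and it contains `u ^ (j * l)`: that power shifts indices by `j * l` modulo `n`,
which preserves residues mod `l` because `l ∣ n`. Hence it contains `E`. For `0 < k < l`, `u ^ k`
moves every index to a different residue class, so `u ^ k * b` has zero diagonal for every `b` in
that subalgebra. -/

/-- The cyclic permutation unitary in `Mₙ(ℂ)`. -/
def cyclicShift (n : ℕ) [NeZero n] : Matrix (Fin n) (Fin n) ℂ :=
  Matrix.of fun i j => if j = i + 1 then 1 else 0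

namespace Matrix

variable (R : Type*) [CommSemiring R] {ι α : Type*} [Fintype ι] [DecidableEq ι]

def blockDiagonalSubalgebra (f : ι → α) : Subalgebra R (Matrix ι ι R) where
  carrier := {b | ∀ i j, f i ≠ f j → b i j = 0}
  add_mem' ha hb i j h := by rw [add_apply, ha i j h, hb i j h, add_zero]
  zero_mem' _ _ _ := rfl
  mul_mem' ha hb i j h := Finset.sum_eq_zero fun m _ => by
    beta_reduce
    by_cases hm : f i = f m
    · rw [hb m j (hm ▸ h), mul_zero]
    · rw [ha i m hm, zero_mul]
  algebraMap_mem' c i j h := by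
    rw [algebraMap_matrix_apply, if_neg (fun hij => h (congrArg f hij))]

variable {R}

theorem single_mem_blockDiagonalSubalgebra (f : ι → α) (i : ι) (c : R) :
    single i i c ∈ blockDiagonalSubalgebra R f := fun _ _ h =>
  single_apply_of_ne _ _ _ _ _ fun ⟨hia, hib⟩ => h (hia ▸ hib ▸ rfl)

theorem trace_mul_eq_zero_of_mem_blockDiagonalSubalgebra {f : ι → α} {A b : Matrix ι ι R}
    (hA : ∀ i j, f i = f j → A i j = 0) (hb : b ∈ blockDiagonalSubalgebra R f) :
    trace (A * b) = 0 := by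
  refine Finset.sum_eq_zero fun i _ => Finset.sum_eq_zero fun m _ => ?_
  change A i m * b m i = 0
  by_cases him : f i = f m
  · rw [hA i m him, zero_mul]
  · rw [hb m i (Ne.symm him), mul_zero]

end Matrix

theorem Fin.val_add_natCast_mod_of_dvd {n l : ℕ} [NeZero n] (hl : l ∣ n) (i : Fin n) (m : ℕ) :
    (i + (m : Fin n)).val % l = (i.val + m) % l := by
  rw [Fin.val_add, Fin.val_natCast, Nat.mod_mod_of_dvd _ hl]
  exact Nat.ModEq.add_left _ (Nat.mod_mod_of_dvd m hl)

theorem cyclicShift_pow_apply (n : ℕ) [NeZero n] (m : ℕ) (i j : Fin n) :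
    (cyclicShift n ^ m) i j = if j = i + (m : Fin n) then 1 else 0 := by
  induction m generalizing j with
  | zero => simp [one_apply, eq_comm]
  | succ m ih =>
    rw [pow_succ, mul_apply, Finset.sum_eq_single (i + (m : Fin n))]
    · rw [ih, if_pos rfl, one_mul]
      simp only [cyclicShift, of_apply, Nat.cast_succ, add_assoc]
    · intro c _ hc
      rw [ih, if_neg hc, zero_mul]
    · simp

theorem cyclicShift_pow_mem_blockDiagonalSubalgebra {n l m : ℕ} [NeZero n] (hl : l ∣ n)
    (hm : l ∣ m) :
    cyclicShift n ^ m ∈ blockDiagonalSubalgebra ℂ (fun i : Fin n => i.val % l) := by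
  obtain ⟨c, rfl⟩ := hm
  intro i j hij
  rw [cyclicShift_pow_apply, if_neg]
  rintro rfl
  dsimp only at hij
  rw [Fin.val_add_natCast_mod_of_dvd hl, Nat.add_mul_mod_self_left] at hij
  exact hij rfl

theorem trace_cyclicShift_pow_mul_eq_zero {n l k : ℕ} [NeZero n] (hl : l ∣ n) (hk : ¬ l ∣ k)
    {b : Matrix (Fin n) (Fin n) ℂ}
    (hb : b ∈ blockDiagonalSubalgebra ℂ (fun i : Fin n => i.val % l)) :
    trace (cyclicShift n ^ k * b) = 0 := by
  refine trace_mul_eq_zero_of_mem_blockDiagonalSubalgebra (fun i j hij => ?_) hb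
  rw [cyclicShift_pow_apply, if_neg]
  rintro rfl
  have hki : i.val + k ≡ i.val + 0 [MOD l] :=
    (Fin.val_add_natCast_mod_of_dvd hl i k).symm.trans hij.symm
  exact hk (Nat.modEq_zero_iff_dvd.mp (Nat.ModEq.add_left_cancel' i.val hki))

theorem normalizedTrace_shift_subalgebra_general (n l : ℕ) [NeZero n]
    (hl : l ∣ n)
    (u : Matrix (Fin n) (Fin n) ℂ) (hu : u = cyclicShift n)
    (S : Set (Matrix (Fin n) (Fin n) ℂ))
    (hS : S = {x | ∃ i : Fin n, x = Matrix.single i i 1} ∪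
      {x | ∃ j : ℕ, 1 ≤ j ∧ j * l ≤ n - l ∧ x = u ^ (j * l)})
    (E : Subalgebra ℂ (Matrix (Fin n) (Fin n) ℂ)) (hE : E = Algebra.adjoin ℂ S) :
    ∀ b ∈ E, (1 / (n : ℂ)) * Matrix.trace b = 0 →
      ∀ k : ℕ, 1 ≤ k → k ≤ l - 1 →
        (1 / (n : ℂ)) * Matrix.trace (u ^ k * b) = 0 := by
  subst hu hS hE
  intro b hb _ k hk1 hk2
  have hbE : b ∈ blockDiagonalSubalgebra ℂ (fun i : Fin n => i.val % l) := by
    refine Algebra.adjoin_le ?_ hb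
    rintro x (⟨i, rfl⟩ | ⟨j, -, -, rfl⟩)
    · exact single_mem_blockDiagonalSubalgebra _ i 1
    · exact cyclicShift_pow_mem_blockDiagonalSubalgebra hl (dvd_mul_left l j)
  rw [trace_cyclicShift_pow_mul_eq_zero hl (Nat.not_dvd_of_pos_of_lt hk1 (by omega)) hbE,
    mul_zero]

/-- Let `n ≥ 2`, `l ∣ n` with `1 ≤ l < n`, and `u` the cyclic permutation unitary.
Let `E` be the subalgebra of `Mₙ(ℂ)` generated by the diagonal matrix units
`e₁₁, …, eₙₙ` together with `u^l, u^(2l), …, u^(n-l)`.  Then for every `b ∈ E` with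
`trₙ(b) = 0` and every `1 ≤ k ≤ l - 1` one has `trₙ(uᵏ b) = 0`. -/
theorem normalizedTrace_shift_subalgebra (n l : ℕ) [NeZero n] (hn : 2 ≤ n)
    (hl : l ∣ n) (hl1 : 1 ≤ l) (hln : l < n)
    (u : Matrix (Fin n) (Fin n) ℂ) (hu : u = cyclicShift n)
    (S : Set (Matrix (Fin n) (Fin n) ℂ))
    (hS : S = {x | ∃ i : Fin n, x = Matrix.single i i 1} ∪
      {x | ∃ j : ℕ, 1 ≤ j ∧ j * l ≤ n - l ∧ x = u ^ (j * l)})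
    (E : Subalgebra ℂ (Matrix (Fin n) (Fin n) ℂ)) (hE : E = Algebra.adjoin ℂ S) :
    ∀ b ∈ E, (1 / (n : ℂ)) * Matrix.trace b = 0 →
      ∀ k : ℕ, 1 ≤ k → k ≤ l - 1 →
        (1 / (n : ℂ)) * Matrix.trace (u ^ k * b) = 0 :=
  normalizedTrace_shift_subalgebra_general n l hl u hu S hS E hE
end

section
/- Let $A$ be a C*-algebra, let $h \in A$ with $h \ge 0$, and let $B = \overline{hAh}$ be the hereditary C*-subalgebra generated by $h$. Suppose $B$ is full in $A$ (the closed two-sided ideal generated by $B$ is all of $A$). If $B$ admits at most one tracial state, then $A$ admits at most one tracial state. -/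
/-- A tracial state on a (possibly non-unital) C*-algebra: a continuous linear functional
of norm `1` which is positive (takes real nonnegative values on elements `a* a`) and
tracial (`τ(xy) = τ(yx)`). -/
def IsTracialState {A : Type*} [NonUnitalCStarAlgebra A] (τ : A →L[ℂ] ℂ) : Prop :=
  ‖τ‖ = 1 ∧ (∀ a : A, 0 ≤ (τ (star a * a)).re) ∧ (∀ a : A, (τ (star a * a)).im = 0) ∧
    ∀ x y : A, τ (x * y) = τ (y * x)

section Aux

variable {A B : Type*} [NonUnitalCStarAlgebra A] [NonUnitalCStarAlgebra B]

/-- Every selfadjoint element is a difference of two squares (via the real non-unital CFC). -/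
lemma sq_diff_aux (x : B) (hx : IsSelfAdjoint x) :
    ∃ s t : B, x = s * s - t * t := by
  refine ⟨cfcₙ (fun r : ℝ => Real.sqrt (max r 0)) x,
          cfcₙ (fun r : ℝ => Real.sqrt (max (-r) 0)) x, ?_⟩
  rw [← cfcₙ_mul _ _ x, ← cfcₙ_mul _ _ x, ← cfcₙ_sub _ _ x]
  conv_lhs => rw [← cfcₙ_id ℝ x hx]
  apply cfcₙ_congr
  intro r _
  simp only [id]
  rw [Real.mul_self_sqrt (le_max_right _ _), Real.mul_self_sqrt (le_max_right _ _)]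
  rcases le_or_gt r 0 with h | h
  · rw [max_eq_right h, max_eq_left (by linarith)]; ring
  · rw [max_eq_left h.le, max_eq_right (by linarith)]; ring

/-- Every element of a non-unital C*-algebra is a combination of four squares. -/
lemma four_squares_aux (b : B) :
    ∃ q₁ q₂ q₃ q₄ : B, b = q₁ * q₁ - q₂ * q₂ + Complex.I • (q₃ * q₃ - q₄ * q₄) := by
  obtain ⟨s₁, t₁, h₁⟩ := sq_diff_aux (realPart b : B) (realPart b).2
  obtain ⟨s₂, t₂, h₂⟩ := sq_diff_aux (imaginaryPart b : B) (imaginaryPart b).2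
  exact ⟨s₁, t₁, s₂, t₂, by rw [← h₁, ← h₂, realPart_add_I_smul_imaginaryPart]⟩

/-- Restriction of a continuous linear functional along an isometric embedding. -/
noncomputable def restrCLM (ι : B →⋆ₙₐ[ℂ] A) (hisom : ∀ b : B, ‖ι b‖ = ‖b‖)
    (τ : A →L[ℂ] ℂ) : B →L[ℂ] ℂ :=
  LinearMap.mkContinuous
    { toFun := fun b => τ (ι b)
      map_add' := fun x y => by simp
      map_smul' := fun c x => by simp }
    ‖τ‖ (fun b => by
      simpa only [hisom b, LinearMap.coe_mk, AddHom.coe_mk] using τ.le_opNorm (ι b))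

@[simp] lemma restrCLM_apply (ι : B →⋆ₙₐ[ℂ] A) (hisom : ∀ b : B, ‖ι b‖ = ‖b‖)
    (τ : A →L[ℂ] ℂ) (b : B) : restrCLM ι hisom τ b = τ (ι b) := rfl

/-- The key lemma: a continuous tracial functional vanishing on the hereditary subalgebra
generated by `h` vanishes on all of `A` (assuming fullness). -/
lemma vanish_of_vanish_on_hereditary (h : A) (ι : B →⋆ₙₐ[ℂ] A)
    (hrange : Set.range ι =
      closure ↑(Submodule.span ℂ {x : A | ∃ a : A, x = h * a * h}))
    (hfull : closure ((TwoSidedIdeal.span {x : A | ∃ a : A, x = h * a * h} :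
      TwoSidedIdeal A) : Set A) = Set.univ)
    (φ : A →L[ℂ] ℂ) (htr : ∀ x y : A, φ (x * y) = φ (y * x))
    (hvan : ∀ b : B, φ (ι b) = 0) : φ = 0 := by
  set s : Set A := {x : A | ∃ a : A, x = h * a * h} with hs
  set M : Set A := closure ↑(Submodule.span ℂ s) with hMdef
  -- `M` is hereditary: `M * A * M ⊆ M`
  have hered : ∀ m₁ ∈ M, ∀ (a : A), ∀ m₂ ∈ M, m₁ * a * m₂ ∈ M := by
    intro m₁ hm₁ a m₂ hm₂
    have base : ∀ x ∈ Submodule.span ℂ s, ∀ y ∈ Submodule.span ℂ s,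
        x * a * y ∈ Submodule.span ℂ s := by
      intro x hx y hy
      induction hx, hy using Submodule.span_induction₂ with
      | mem_mem x y hx hy =>
          obtain ⟨c, rfl⟩ := hx
          obtain ⟨c', rfl⟩ := hy
          refine Submodule.subset_span ⟨c * (h * (a * (h * c'))), ?_⟩
          simp only [mul_assoc]
      | zero_left y hy => simpa using Submodule.zero_mem _
      | zero_right x hx => simpa using Submodule.zero_mem _
      | add_left x y z hx hy hz h₁ h₂ =>
          have : (x + y) * a * z = x * a * z + y * a * z := by noncomm_ring
          rw [this]; exact Submodule.add_mem _ h₁ h₂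
      | add_right x y z hx hy hz h₁ h₂ =>
          have : x * a * (y + z) = x * a * y + x * a * z := by noncomm_ring
          rw [this]; exact Submodule.add_mem _ h₁ h₂
      | smul_left r x y hx hy h₁ =>
          have : (r • x) * a * y = r • (x * a * y) := by
            simp [smul_mul_assoc]
          rw [this]; exact Submodule.smul_mem _ _ h₁
      | smul_right r x y hx hy h₁ =>
          have : x * a * (r • y) = r • (x * a * y) := by
            simp [mul_smul_comm]
          rw [this]; exact Submodule.smul_mem _ _ h₁
    have hcont : Continuous (Function.uncurry fun x y : A => x * a * y) :=
      (continuous_fst.mul continuous_const).mul continuous_snd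
    exact map_mem_closure₂ (f := fun x y : A => x * a * y) hcont hm₁ hm₂ base
  -- φ vanishes on `M`
  have mem_zero : ∀ m ∈ M, φ m = 0 := by
    intro m hm
    rw [← hrange] at hm
    obtain ⟨b, rfl⟩ := hm
    exact hvan b
  -- φ vanishes on `M * A`
  have left : ∀ m ∈ M, ∀ w : A, φ (m * w) = 0 := by
    intro m hm w
    have hm' : m ∈ Set.range ι := by rw [hrange]; exact hm
    obtain ⟨b, rfl⟩ := hm'
    obtain ⟨q₁, q₂, q₃, q₄, hb⟩ := four_squares_aux b
    have key : ∀ q : B, φ (ι q * ι q * w) = 0 := by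
      intro q
      rw [mul_assoc, htr]
      have hq : ι q ∈ M := by rw [← hrange]; exact ⟨q, rfl⟩
      exact mem_zero _ (hered _ hq w _ hq)
    have hιb : ι b = ι q₁ * ι q₁ - ι q₂ * ι q₂ + Complex.I • (ι q₃ * ι q₃ - ι q₄ * ι q₄) := by
      rw [hb]; simp [map_add, map_sub, map_mul, map_smul]
    rw [hιb]
    have expand : (ι q₁ * ι q₁ - ι q₂ * ι q₂ + Complex.I • (ι q₃ * ι q₃ - ι q₄ * ι q₄)) * w
        = (ι q₁ * ι q₁ * w - ι q₂ * ι q₂ * w)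
          + Complex.I • (ι q₃ * ι q₃ * w - ι q₄ * ι q₄ * w) := by
      simp [add_mul, sub_mul, smul_mul_assoc]
    rw [expand]
    simp [key]
  -- the set where φ and its translates vanish is a two-sided ideal
  let T : TwoSidedIdeal A := TwoSidedIdeal.mk'
    {a : A | (∀ w : A, φ (a * w) = 0) ∧ (∀ w : A, φ (w * a) = 0) ∧ φ a = 0}
    (by refine ⟨fun w => by simp, fun w => by simp, by simp⟩)
    (by
      rintro x y ⟨hx1, hx2, hx3⟩ ⟨hy1, hy2, hy3⟩
      refine ⟨fun w => ?_, fun w => ?_, ?_⟩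
      · rw [add_mul, map_add, hx1 w, hy1 w, add_zero]
      · rw [mul_add, map_add, hx2 w, hy2 w, add_zero]
      · rw [map_add, hx3, hy3, add_zero])
    (by
      rintro x ⟨hx1, hx2, hx3⟩
      refine ⟨fun w => ?_, fun w => ?_, ?_⟩
      · rw [neg_mul, map_neg, hx1 w, neg_zero]
      · rw [mul_neg, map_neg, hx2 w, neg_zero]
      · rw [map_neg, hx3, neg_zero])
    (by
      rintro x y ⟨hy1, hy2, hy3⟩
      refine ⟨fun w => ?_, fun w => ?_, ?_⟩
      · rw [mul_assoc, htr]
        rw [mul_assoc]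
        exact hy1 _
      · rw [← mul_assoc]
        exact hy2 _
      · rw [htr]; exact hy1 x)
    (by
      rintro x y ⟨hx1, hx2, hx3⟩
      refine ⟨fun w => ?_, fun w => ?_, ?_⟩
      · rw [mul_assoc]
        exact hx1 _
      · rw [← mul_assoc, htr, ← mul_assoc]
        exact hx2 _
      · exact hx1 y)
  have hsub : s ⊆ (T : Set A) := by
    intro a ha
    have haM : a ∈ M := subset_closure (Submodule.subset_span ha)
    rw [SetLike.mem_coe, TwoSidedIdeal.mem_mk']
    exact ⟨fun w => left a haM w, fun w => by rw [htr]; exact left a haM w, mem_zero a haM⟩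
  have hspan : ∀ x ∈ (TwoSidedIdeal.span s : TwoSidedIdeal A), φ x = 0 := by
    intro x hx
    have hxT : x ∈ T := TwoSidedIdeal.mem_span_iff.mp hx T hsub
    rw [TwoSidedIdeal.mem_mk'] at hxT
    exact hxT.2.2
  have hclosed : IsClosed {a : A | φ a = 0} :=
    isClosed_eq φ.continuous continuous_const
  have : closure ((TwoSidedIdeal.span s : TwoSidedIdeal A) : Set A) ⊆ {a : A | φ a = 0} :=
    closure_minimal (fun x hx => hspan x hx) hclosed
  rw [hfull] at this
  ext a
  exact this (Set.mem_univ a)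

end Aux

/-- Let `A` be a C*-algebra, `h ∈ A` positive, and let `B = cl(hAh)` be the hereditary
C*-subalgebra generated by `h` (realized here as a C*-algebra `B` with an isometric
*-embedding `ι` onto the closure of the span of `{h a h : a ∈ A}`).  If `B` is full in
`A` (the closed two-sided ideal it generates is all of `A`) and `B` admits at most one
tracial state, then `A` admits at most one tracial state. -/
theorem unique_trace_of_full_hereditary (A B : Type*)
    [NonUnitalCStarAlgebra A] [NonUnitalCStarAlgebra B]
    (h : A) (hpos : ∃ b : A, h = star b * b)
    (ι : B →⋆ₙₐ[ℂ] A) (hisom : ∀ b : B, ‖ι b‖ = ‖b‖)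
    (hrange : Set.range ι =
      closure ↑(Submodule.span ℂ {x : A | ∃ a : A, x = h * a * h}))
    (hfull : closure ((TwoSidedIdeal.span {x : A | ∃ a : A, x = h * a * h} :
      TwoSidedIdeal A) : Set A) = Set.univ)
    (huniqueB : ∀ σ₁ σ₂ : B →L[ℂ] ℂ, IsTracialState σ₁ → IsTracialState σ₂ → σ₁ = σ₂) :
    ∀ τ₁ τ₂ : A →L[ℂ] ℂ, IsTracialState τ₁ → IsTracialState τ₂ → τ₁ = τ₂ := by
  intro τ₁ τ₂ ht₁ ht₂
  obtain ⟨hn₁, hp₁, hi₁, htr₁⟩ := ht₁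
  obtain ⟨hn₂, hp₂, hi₂, htr₂⟩ := ht₂
  -- restrictions to B
  set σ₁' : B →L[ℂ] ℂ := restrCLM ι hisom τ₁ with hσ₁'
  set σ₂' : B →L[ℂ] ℂ := restrCLM ι hisom τ₂ with hσ₂'
  -- the restrictions are nonzero
  have hnz : ∀ (τ : A →L[ℂ] ℂ), ‖τ‖ = 1 → (∀ x y : A, τ (x * y) = τ (y * x)) →
      restrCLM ι hisom τ ≠ 0 := by
    intro τ hn htr hzero
    have hvan : ∀ b : B, τ (ι b) = 0 := by
      intro b
      have := congrFun (congrArg DFunLike.coe hzero) b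
      simpa using this
    have : τ = 0 := vanish_of_vanish_on_hereditary h ι hrange hfull τ htr hvan
    rw [this] at hn
    simp at hn
  have hnz₁ : σ₁' ≠ 0 := hnz τ₁ hn₁ htr₁
  have hnz₂ : σ₂' ≠ 0 := hnz τ₂ hn₂ htr₂
  set c₁ : ℝ := ‖σ₁'‖ with hc₁
  set c₂ : ℝ := ‖σ₂'‖ with hc₂
  have hc₁pos : 0 < c₁ := norm_pos_iff.mpr hnz₁
  have hc₂pos : 0 < c₂ := norm_pos_iff.mpr hnz₂
  -- the normalized restrictions are tracial states
  have hstate : ∀ (τ : A →L[ℂ] ℂ), (∀ a : A, 0 ≤ (τ (star a * a)).re) →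
      (∀ a : A, (τ (star a * a)).im = 0) → (∀ x y : A, τ (x * y) = τ (y * x)) →
      ∀ c : ℝ, c = ‖restrCLM ι hisom τ‖ → 0 < c →
      IsTracialState ((↑c⁻¹ : ℂ) • restrCLM ι hisom τ) := by
    intro τ hp hi htr c hc hcpos
    refine ⟨?_, ?_, ?_, ?_⟩
    · rw [norm_smul (↑c⁻¹ : ℂ) (restrCLM ι hisom τ), Complex.norm_real, Real.norm_eq_abs,
        abs_of_pos (inv_pos.mpr hcpos), ← hc, inv_mul_cancel₀ hcpos.ne']
    · intro a
      have : ((↑c⁻¹ : ℂ) • restrCLM ι hisom τ) (star a * a)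
          = (↑c⁻¹ : ℂ) * τ (star (ι a) * ι a) := by
        simp [map_mul, map_star]
      rw [this, Complex.re_ofReal_mul _ _]
      exact mul_nonneg (inv_nonneg.mpr hcpos.le) (hp (ι a))
    · intro a
      have : ((↑c⁻¹ : ℂ) • restrCLM ι hisom τ) (star a * a)
          = (↑c⁻¹ : ℂ) * τ (star (ι a) * ι a) := by
        simp [map_mul, map_star]
      rw [this, Complex.im_ofReal_mul _ _, hi (ι a), mul_zero]
    · intro x y
      simp only [ContinuousLinearMap.smul_apply, restrCLM_apply, map_mul]
      rw [htr]
  have hts₁ : IsTracialState ((↑c₁⁻¹ : ℂ) • σ₁') := hstate τ₁ hp₁ hi₁ htr₁ c₁ hc₁ hc₁pos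
  have hts₂ : IsTracialState ((↑c₂⁻¹ : ℂ) • σ₂') := hstate τ₂ hp₂ hi₂ htr₂ c₂ hc₂ hc₂pos
  have heq := huniqueB _ _ hts₁ hts₂
  -- derive τ₁ (ι b) = (c₁/c₂) * τ₂ (ι b)
  set k : ℝ := c₁ / c₂ with hk
  have hkey : ∀ b : B, τ₁ (ι b) = (↑k : ℂ) * τ₂ (ι b) := by
    intro b
    have := congrFun (congrArg DFunLike.coe heq) b
    simp only [hσ₁', hσ₂', ContinuousLinearMap.smul_apply, restrCLM_apply,
      smul_eq_mul, Complex.ofReal_inv] at this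
    have hc₁ne : (↑c₁ : ℂ) ≠ 0 := by exact_mod_cast hc₁pos.ne'
    have hc₂ne : (↑c₂ : ℂ) ≠ 0 := by exact_mod_cast hc₂pos.ne'
    have hx : τ₁ (ι b) = (↑c₁ : ℂ) * ((↑c₂ : ℂ)⁻¹ * τ₂ (ι b)) := by
      rw [← this]; field_simp
    rw [hk]
    push_cast
    rw [hx]
    ring
  -- φ := τ₁ - k • τ₂ vanishes
  have hφ : τ₁ - (↑k : ℂ) • τ₂ = 0 := by
    apply vanish_of_vanish_on_hereditary h ι hrange hfull
    · intro x y
      simp only [ContinuousLinearMap.sub_apply, ContinuousLinearMap.smul_apply, smul_eq_mul]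
      rw [htr₁, htr₂]
    · intro b
      simp only [ContinuousLinearMap.sub_apply, ContinuousLinearMap.smul_apply, smul_eq_mul]
      rw [hkey b, sub_self]
  have hττ : τ₁ = (↑k : ℂ) • τ₂ := sub_eq_zero.mp hφ
  have hknorm : k = 1 := by
    have : ‖τ₁‖ = ‖(↑k : ℂ) • τ₂‖ := by rw [hττ]
    rw [hn₁, norm_smul ((↑k : ℝ) : ℂ) τ₂, hn₂, mul_one, Complex.norm_real, Real.norm_eq_abs,
      abs_of_pos (div_pos hc₁pos hc₂pos)] at this
    exact this.symm
  rw [hττ, hknorm]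
  simp
end

section
/- Let $A$ be a unital C*-algebra, $A_0 \subseteq A$ a closed two-sided ideal with a tracial state $\eta$, $e \in A$ a projection with $e \notin A_0$, and suppose $m \in \mathbb{R}$ and $a_0 \in A_0$ satisfy $m e + e a_0 e \ge 0$. Then $m \ge 0$. (If $m < 0$ then $e a_0 e \ge -m e$ would force $e a_0 e$ to be invertible in $eAe$, hence $e \in A_0$, a contradiction.) -/
/-- A tracial state on a C*-subalgebra realized as a `NonUnitalStarSubalgebra`:
a continuous linear functional of norm `1`, positive and tracial. -/
def IsTracialStateOn {A : Type*} [CStarAlgebra A] (A₀ : NonUnitalStarSubalgebra ℂ A)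
    (η : A₀ →L[ℂ] ℂ) : Prop :=
  ‖η‖ = 1 ∧ (∀ x : A₀, 0 ≤ (η (star x * x)).re) ∧ (∀ x : A₀, (η (star x * x)).im = 0) ∧
    ∀ x y : A₀, η (x * y) = η (y * x)

/-- Let `A` be a unital C*-algebra, `A₀ ⊆ A` a closed two-sided ideal carrying a tracial
state `η`, `e ∈ A` a projection with `e ∉ A₀`, and suppose `m ∈ ℝ` and `a₀ ∈ A₀` satisfy
`m e + e a₀ e ≥ 0`.  Then `m ≥ 0`. -/
theorem nonneg_coeff_of_projection_not_in_ideal (A : Type*) [CStarAlgebra A]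
    [PartialOrder A] [StarOrderedRing A]
    (A₀ : NonUnitalStarSubalgebra ℂ A) (hclosed : IsClosed (A₀ : Set A))
    (hleft : ∀ (a : A) (x : A), x ∈ A₀ → a * x ∈ A₀)
    (hright : ∀ (a : A) (x : A), x ∈ A₀ → x * a ∈ A₀)
    (η : A₀ →L[ℂ] ℂ) (hη : IsTracialStateOn A₀ η)
    (e : A) (he_proj : e * e = e ∧ star e = e) (he_notin : e ∉ A₀)
    (m : ℝ) (a₀ : A) (ha₀ : a₀ ∈ A₀)
    (hpos : 0 ≤ (m : ℂ) • e + e * a₀ * e) :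
    0 ≤ m := by
  by_contra hm
  push_neg at hm
  set c : A := e * a₀ * e with hc
  have hcA₀ : c ∈ A₀ := hright e _ (hleft e a₀ ha₀)
  set s : A := ((m : ℂ) • e + c) + ((-m : ℝ) : ℂ) • (1 : A) with hs
  -- `(-m) • 1` is nonnegative and invertible
  have h1 : (((-m : ℝ) : ℂ) • (1 : A)) = algebraMap ℝ A (-m) := by
    rw [Algebra.algebraMap_eq_smul_one]
    norm_num [← Complex.coe_smul]
  have hone_nonneg : (0 : A) ≤ ((-m : ℝ) : ℂ) • (1 : A) := by
    have key := star_mul_self_nonneg (((Real.sqrt (-m) : ℝ) : ℂ) • (1 : A))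
    have : star (((Real.sqrt (-m) : ℝ) : ℂ) • (1 : A)) * (((Real.sqrt (-m) : ℝ) : ℂ) • (1 : A))
        = ((-m : ℝ) : ℂ) • (1 : A) := by
      rw [star_smul, star_one, smul_mul_smul_comm, one_mul]
      congr 1
      rw [Complex.star_def, Complex.conj_ofReal, ← Complex.ofReal_mul, Real.mul_self_sqrt (by linarith)]
    rwa [this] at key
  have hone_unit : IsUnit (((-m : ℝ) : ℂ) • (1 : A)) := by
    rw [h1]
    exact (isUnit_iff_ne_zero.mpr (ne_of_gt (by linarith : (0:ℝ) < -m))).map (algebraMap ℝ A)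
  have hle : ((-m : ℝ) : ℂ) • (1 : A) ≤ s := by
    rw [hs]
    exact le_add_of_nonneg_left hpos
  have hsu : IsUnit s := CStarAlgebra.isUnit_of_le _ hle (hone_unit.isStrictlyPositive hone_nonneg)
  obtain ⟨u, hu⟩ := hsu
  -- `s * e = c`
  have hse : s * e = c := by
    have hce : c * e = c := by rw [hc, mul_assoc, he_proj.1]
    rw [hs]
    push_cast
    rw [add_mul, add_mul, smul_mul_assoc, he_proj.1, hce, smul_mul_assoc, one_mul]
    push_cast
    module
  -- hence `e = u⁻¹ * c ∈ A₀`
  have he_eq : e = (↑u⁻¹ : A) * c := by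
    rw [← hse, ← hu, ← mul_assoc, u.inv_mul, one_mul]
  exact he_notin (he_eq ▸ hleft _ _ hcA₀)
end
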